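/- Let F = 𝒫(𝔾) for a nonempty subset 𝔾 ⊆ G(p,V). Then A ∈ Int F if and only if there exists ε > 0 such that A − ε·I + Int 𝒫 is contained in F (where I is the identity and Int 𝒫 the positive definite cone). -/

import Mathlib

/-!
Positive operators have nonnegative partial traces, since `tr_W P = tr (P_W P P_W)` and
`P_W P P_W ≥ 0`; hence `𝒫(𝔾) + 𝒫 ⊆ 𝒫(𝔾)`. If a ball of radius `δ` about `A` lies in `𝒫(𝔾)`, then
so does `A - (δ/2) I`, and with it `A - (δ/2) I + Int 𝒫`. Conversely, every self-adjoint operator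
within `ε` of `ε I` is positive, so the ball of radius `ε` about `A` lies in `A - ε I + Int 𝒫`.
-/

open Module RealInnerProductSpace

noncomputable section

variable {V : Type*} [NormedAddCommGroup V] [InnerProductSpace ℝ V] [FiniteDimensional ℝ V]

/-- Orthogonal projection onto the subspace `W`, as an endomorphism of `V`. -/
def projCLM (W : Submodule ℝ V) : V →L[ℝ] V :=
  W.subtypeL.comp (W.orthogonalProjectionOnto)

/-- `tr_W A = tr (P_W ∘ A)`, the trace of the restriction of `A` to `W`. -/
def trW (W : Submodule ℝ V) (A : V →L[ℝ] V) : ℝ :=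
  LinearMap.trace ℝ V (((projCLM W).comp A : V →L[ℝ] V) : V →ₗ[ℝ] V)

/-- The subequation `𝒫(𝔾) ⊆ Sym²(V)`: self-adjoint endomorphisms `A` with
`tr_W A ≥ 0` for all `W ∈ 𝔾`. -/
def PG (𝔾 : Set (Submodule ℝ V)) : Set (selfAdjoint (V →L[ℝ] V)) :=
  {A | ∀ W ∈ 𝔾, 0 ≤ trW W (A : V →L[ℝ] V)}

/-- The positive semidefinite cone `𝒫 ⊆ Sym²(V)`. -/
def posSA : Set (selfAdjoint (V →L[ℝ] V)) :=
  {A | ContinuousLinearMap.IsPositive (A : V →L[ℝ] V)}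

/-- The identity `I` as an element of `Sym²(V)`. -/
def idSA : selfAdjoint (V →L[ℝ] V) := ⟨1, IsSelfAdjoint.one _⟩

theorem trW_eq_trace_conj (W : Submodule ℝ V) (T : V →L[ℝ] V) :
    trW W T = LinearMap.trace ℝ V ((projCLM W ∘L T ∘L projCLM W : V →L[ℝ] V) : V →ₗ[ℝ] V) := by
  have hP : projCLM W ∘L projCLM W = projCLM W := W.isIdempotentElem_starProjection.eq
  calc trW W T
      = LinearMap.trace ℝ V ((projCLM W ∘L projCLM W ∘L T : V →L[ℝ] V) : V →ₗ[ℝ] V) := by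
        rw [trW, ← ContinuousLinearMap.comp_assoc, hP]
    _ = LinearMap.trace ℝ V
          ((projCLM W : V →ₗ[ℝ] V) ∘ₗ ((projCLM W ∘L T : V →L[ℝ] V) : V →ₗ[ℝ] V)) := rfl
    _ = _ := LinearMap.trace_comp_comm' _ _

theorem trW_nonneg_of_isPositive (W : Submodule ℝ V) {T : V →L[ℝ] V} (hT : T.IsPositive) :
    0 ≤ trW W T := by
  rw [trW_eq_trace_conj]
  exact (hT.conj_starProjection W).toLinearMap.trace_nonneg

theorem trW_add (W : Submodule ℝ V) (A B : V →L[ℝ] V) :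
    trW W (A + B) = trW W A + trW W B := by
  simp only [trW, ContinuousLinearMap.comp_add, ContinuousLinearMap.toLinearMap_add, map_add]

theorem add_mem_PG_of_mem_posSA {𝔾 : Set (Submodule ℝ V)} {A P : selfAdjoint (V →L[ℝ] V)}
    (hA : A ∈ PG 𝔾) (hP : P ∈ posSA) : A + P ∈ PG 𝔾 := fun W hW => by
  rw [AddSubgroup.coe_add, trW_add]
  exact add_nonneg (hA W hW) (trW_nonneg_of_isPositive W hP)

theorem norm_smul_idSA_le {ε : ℝ} (hε : 0 ≤ ε) : ‖ε • (idSA : selfAdjoint (V →L[ℝ] V))‖ ≤ ε :=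
  calc ‖ε • (idSA : selfAdjoint (V →L[ℝ] V))‖ = ‖ε • (1 : V →L[ℝ] V)‖ := rfl
    _ ≤ ‖ε‖ * ‖(1 : V →L[ℝ] V)‖ := ContinuousLinearMap.opNorm_smul_le _ _
    _ ≤ ε * 1 := by
      rw [Real.norm_of_nonneg hε]
      exact mul_le_mul_of_nonneg_left ContinuousLinearMap.norm_id_le hε
    _ = ε := mul_one ε

theorem ContinuousLinearMap.isPositive_of_norm_sub_smul_one_le {E : Type*} [NormedAddCommGroup E]
    [InnerProductSpace ℝ E] {T : E →L[ℝ] E} (hT : T.IsSymmetric) {ε : ℝ}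
    (h : ‖T - ε • 1‖ ≤ ε) : T.IsPositive := by
  refine ⟨hT, fun x => ?_⟩
  have hdecomp : ⟪T x, x⟫ = ⟪(T - ε • 1) x, x⟫ + ε * (‖x‖ * ‖x‖) := by
    simp only [_root_.sub_apply, _root_.smul_apply, one_apply_eq_self, inner_sub_left,
      real_inner_smul_left, real_inner_self_eq_norm_mul_norm]
    ring
  have hbound : |⟪(T - ε • 1) x, x⟫| ≤ ε * (‖x‖ * ‖x‖) :=
    calc |⟪(T - ε • 1) x, x⟫| ≤ ‖(T - ε • 1) x‖ * ‖x‖ := abs_real_inner_le_norm _ _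
      _ ≤ ‖T - ε • 1‖ * ‖x‖ * ‖x‖ := by gcongr; exact (T - ε • 1).le_opNorm x
      _ ≤ ε * (‖x‖ * ‖x‖) := by rw [mul_assoc]; gcongr
  change 0 ≤ ⟪T x, x⟫
  linarith [neg_abs_le ⟪(T - ε • 1) x, x⟫]

theorem ball_smul_idSA_subset_posSA (ε : ℝ) :
    Metric.ball (ε • idSA : selfAdjoint (V →L[ℝ] V)) ε ⊆ posSA := fun C hC =>
  ContinuousLinearMap.isPositive_of_norm_sub_smul_one_le
    (ContinuousLinearMap.isSelfAdjoint_iff_isSymmetric.mp C.2) (mem_ball_iff_norm.mp hC).le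

theorem statement6_general (𝔾 : Set (Submodule ℝ V)) (A : selfAdjoint (V →L[ℝ] V)) :
    A ∈ interior (PG 𝔾) ↔
      ∃ ε : ℝ, 0 < ε ∧ ∀ P ∈ interior (posSA (V := V)), A - ε • idSA + P ∈ PG 𝔾 := by
  rw [mem_interior_iff_mem_nhds, Metric.mem_nhds_iff]
  constructor
  · rintro ⟨δ, hδ, hball⟩
    have hshift : A - (δ / 2) • idSA ∈ PG 𝔾 := hball <| by
      rw [mem_ball_iff_norm, sub_sub_cancel_left, norm_neg]
      exact (norm_smul_idSA_le (by positivity)).trans_lt (half_lt_self hδ)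
    exact ⟨δ / 2, half_pos hδ, fun P hP => add_mem_PG_of_mem_posSA hshift (interior_subset hP)⟩
  · rintro ⟨ε, hε, h⟩
    refine ⟨ε, hε, fun B hB => ?_⟩
    have hP : ε • idSA + (B - A) ∈ interior posSA :=
      interior_maximal (ball_smul_idSA_subset_posSA ε) Metric.isOpen_ball <| by
        rwa [mem_ball_iff_norm, add_sub_cancel_left, ← mem_ball_iff_norm]
    convert h _ hP using 1
    abel

/-- `A ∈ Int F` iff for some `ε > 0` the set `A - εI + Int 𝒫` is
contained in `F = 𝒫(𝔾)`. -/
theorem statement6 (p : ℕ) (𝔾 : Set (Submodule ℝ V)) (h𝔾 : 𝔾.Nonempty)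
    (hGr : ∀ W ∈ 𝔾, finrank ℝ W = p) (A : selfAdjoint (V →L[ℝ] V)) :
    A ∈ interior (PG 𝔾) ↔
      ∃ ε : ℝ, 0 < ε ∧ ∀ P ∈ interior (posSA (V := V)), A - ε • idSA + P ∈ PG 𝔾 :=
  statement6_general 𝔾 A
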